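/- arXiv:1405.7604 — 5 statements merged into one kernel-verified Lean document; each statement's English description precedes it below -/
import Mathlib

section
/- Let p be prime, r ≥ 1, d ≥ 0, K a field of characteristic p, g ∈ K^{1/p} (so g^p ∈ K), and g_i defined by g_1 = g, g_i = g^{p^{1-i}} g_{i-1}^{p^r}. Then the polynomial S_d((g_d u^{p^{dr}},...,g_1 u^{p^r}, u);(g_d v^{p^{dr}},...,g_1 v^{p^r}, v)) has all coefficients in K, i.e., lies in K[u,v]. -/
set_option linter.unusedSectionVars false

open MvPolynomial

namespace WittSubstAux

open WittVector

variable {p : ℕ} [hp : Fact p.Prime]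

/-! ### The Teichmüller-multiplication coefficient formula -/

private theorem teich_mul_aux₁ {σ : Type*} (t : MvPolynomial σ ℚ)
    (x : WittVector p (MvPolynomial σ ℚ)) :
    teichmuller p t * x = WittVector.mk p fun k => t ^ p ^ k * x.coeff k := by
  haveI : Invertible (p : ℚ) := invertibleOfNonzero (by exact_mod_cast hp.out.ne_zero)
  haveI : Invertible (p : MvPolynomial σ ℚ) := by
    have h := Invertible.map (algebraMap ℚ (MvPolynomial σ ℚ)) (p : ℚ)
    rwa [map_natCast] at h
  apply (WittVector.ghostMap.bijective_of_invertible p (MvPolynomial σ ℚ)).injective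
  funext n
  rw [RingHom.map_mul]
  rw [Pi.mul_apply, ghostMap_apply, ghostMap_apply, ghostMap_apply,
    ghostComponent_teichmuller, ghostComponent_apply, ghostComponent_apply,
    aeval_wittPolynomial, aeval_wittPolynomial]
  rw [Finset.mul_sum]
  apply Finset.sum_congr rfl
  intro i hi
  rw [WittVector.coeff_mk]
  have hin : p ^ i * p ^ (n - i) = p ^ n := by
    rw [← pow_add]
    congr 1
    exact Nat.add_sub_cancel' (Nat.lt_succ_iff.mp (Finset.mem_range.mp hi))
  rw [mul_pow, ← pow_mul, hin]
  ring

private theorem teich_mul_aux₂ {σ : Type*} (t : MvPolynomial σ ℤ)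
    (x : WittVector p (MvPolynomial σ ℤ)) :
    teichmuller p t * x = WittVector.mk p fun k => t ^ p ^ k * x.coeff k := by
  apply WittVector.map_injective (MvPolynomial.map (Int.castRingHom ℚ))
    (MvPolynomial.map_injective _ Int.cast_injective)
  rw [RingHom.map_mul, WittVector.map_teichmuller, teich_mul_aux₁]
  ext n
  rw [WittVector.map_coeff, WittVector.coeff_mk, WittVector.coeff_mk, map_mul, map_pow,
    WittVector.map_coeff]

theorem teichmuller_mul_coeff {R : Type*} [CommRing R] (t : R) (x : WittVector p R) (k : ℕ) :
    (teichmuller p t * x).coeff k = t ^ p ^ k * x.coeff k := by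
  classical
  let f : MvPolynomial (Option ℕ) ℤ →+* R :=
    MvPolynomial.eval₂Hom (Int.castRingHom R) fun s => Option.elim s t fun n => x.coeff n
  have hfn : f (MvPolynomial.X Option.none) = t := by simp [f]
  have hx : WittVector.map f (WittVector.mk p fun n => MvPolynomial.X (Option.some n)) = x := by
    ext n
    rw [WittVector.map_coeff, WittVector.coeff_mk]
    simp [f]
  have key := teich_mul_aux₂ (p := p) (MvPolynomial.X (σ := Option ℕ) Option.none)
      (WittVector.mk p fun n => MvPolynomial.X (Option.some n))
  have h2 := congrArg (fun z => (WittVector.map f z).coeff k) key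
  rw [RingHom.map_mul, WittVector.map_teichmuller, hx, hfn] at h2
  rw [h2, WittVector.map_coeff, WittVector.coeff_mk, map_mul, map_pow, hfn,
    WittVector.coeff_mk]
  simp [f]


variable {R : Type*} [CommRing R]


/-! ### Iterates of Verschiebung and Frobenius -/

private noncomputable def vIter (m : ℕ) (x : WittVector p R) : WittVector p R :=
  (fun y => verschiebung y)^[m] x

private theorem vIter_zero (x : WittVector p R) : vIter 0 x = x := rfl

private theorem vIter_succ (m : ℕ) (x : WittVector p R) :
    vIter (m + 1) x = verschiebung (vIter m x) :=
  Function.iterate_succ_apply' _ _ _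

private theorem vIter_coeff_lt (m k : ℕ) (hk : k < m) (x : WittVector p R) :
    (vIter m x).coeff k = 0 := by
  induction m generalizing k with
  | zero => omega
  | succ m ih =>
    rw [vIter_succ]
    cases k with
    | zero => exact verschiebung_coeff_zero _
    | succ k => rw [verschiebung_coeff_succ]; exact ih k (by omega)

private theorem vIter_coeff_add (m k : ℕ) (x : WittVector p R) :
    (vIter m x).coeff (m + k) = x.coeff k := by
  induction m generalizing k with
  | zero => rw [vIter_zero, Nat.zero_add]
  | succ m ih =>
    rw [vIter_succ]
    have h : m + 1 + k = (m + k) + 1 := by omega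
    rw [h, verschiebung_coeff_succ, ih]

private theorem vIter_add (m : ℕ) (x y : WittVector p R) :
    vIter m (x + y) = vIter m x + vIter m y := by
  induction m with
  | zero => rfl
  | succ m ih => rw [vIter_succ, ih, map_add, vIter_succ, vIter_succ]

private noncomputable def fIter (rr : ℕ) (x : WittVector p R) : WittVector p R :=
  (fun y => frobenius y)^[rr] x

private theorem fIter_succ (rr : ℕ) (x : WittVector p R) :
    fIter (rr + 1) x = frobenius (fIter rr x) :=
  Function.iterate_succ_apply' _ _ _

private theorem fIter_coeff [CharP R p] (rr k : ℕ) (x : WittVector p R) :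
    (fIter rr x).coeff k = x.coeff k ^ p ^ rr := by
  induction rr with
  | zero => simp [fIter]
  | succ rr ih =>
    rw [fIter_succ, coeff_frobenius_charP, ih, ← pow_mul, pow_succ]

private theorem fIter_add (rr : ℕ) (x y : WittVector p R) :
    fIter rr (x + y) = fIter rr x + fIter rr y := by
  induction rr with
  | zero => rfl
  | succ rr ih => rw [fIter_succ, ih, RingHom.map_add, fIter_succ, fIter_succ]

/-! ### Shift and truncation -/

private noncomputable def shiftW (m : ℕ) (x : WittVector p R) : WittVector p R :=
  WittVector.mk p fun k => x.coeff (m + k)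

private theorem shiftW_coeff (m k : ℕ) (x : WittVector p R) :
    (shiftW m x).coeff k = x.coeff (m + k) := by
  simp [shiftW, WittVector.coeff_mk]

private noncomputable def truncW (m : ℕ) (x : WittVector p R) : WittVector p R :=
  WittVector.mk p fun k => if k < m then x.coeff k else 0

private theorem truncW_coeff (m k : ℕ) (x : WittVector p R) :
    (truncW m x).coeff k = if k < m then x.coeff k else 0 := by
  simp [truncW, WittVector.coeff_mk]

private theorem eq_trunc_add_vIter (m : ℕ) (x : WittVector p R) :
    x = truncW m x + vIter m (shiftW m x) := by
  ext n
  rw [coeff_add_of_disjoint]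
  · by_cases h : n < m
    · rw [truncW_coeff, if_pos h, vIter_coeff_lt m n h, add_zero]
    · obtain ⟨j, rfl⟩ := Nat.exists_eq_add_of_le (Nat.le_of_not_lt h)
      rw [truncW_coeff, if_neg h, vIter_coeff_add, shiftW_coeff, zero_add]
  · intro n
    by_cases h : n < m
    · right; exact vIter_coeff_lt m n h _
    · left; rw [truncW_coeff, if_neg h]

/-- the key "no carries from below" computation -/
private theorem add_coeff_shift (m : ℕ) (x y : WittVector p R)
    (hy : ∀ k, k < m → y.coeff k = 0) (j : ℕ) :
    (x + y).coeff (m + j) = (shiftW m x + shiftW m y).coeff j := by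
  have hy' : y = vIter m (shiftW m y) := by
    ext n
    by_cases h : n < m
    · rw [vIter_coeff_lt m n h, hy n h]
    · obtain ⟨i, rfl⟩ := Nat.exists_eq_add_of_le (Nat.le_of_not_lt h)
      rw [vIter_coeff_add, shiftW_coeff]
  have hsplit : x + y = truncW m x + vIter m (shiftW m x + shiftW m y) := by
    rw [vIter_add, ← add_assoc, ← eq_trunc_add_vIter, ← hy']
  rw [hsplit, coeff_add_of_disjoint]
  · rw [truncW_coeff, if_neg (by omega), vIter_coeff_add, zero_add]
  · intro n
    by_cases h : n < m
    · right; exact vIter_coeff_lt m n h _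
    · left; rw [truncW_coeff, if_neg h]

/-! ### Subring closure of integral polynomial evaluation -/

private theorem aeval_mem {A : Type*} [CommRing A] (S : Subring A) {σ : Type*}
    (φ : MvPolynomial σ ℤ) (v : σ → A) (hv : ∀ s, v s ∈ S) :
    MvPolynomial.aeval v φ ∈ S := by
  induction φ using MvPolynomial.induction_on with
  | C a => rw [aeval_C, algebraMap_int_eq, eq_intCast]; exact intCast_mem S a
  | add f g hf hg => rw [map_add]; exact S.add_mem hf hg
  | mul_X f i hf => rw [map_mul, aeval_X]; exact S.mul_mem hf (hv i)


/-! ### The coefficient subring -/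

private def coeffSubring {L : Type*} [CommRing L] (K' : Subring L) :
    Subring (MvPolynomial (Fin 2) L) where
  carrier := {f | ∀ mm : Fin 2 →₀ ℕ, MvPolynomial.coeff mm f ∈ K'}
  zero_mem' := fun mm => by rw [MvPolynomial.coeff_zero]; exact K'.zero_mem
  one_mem' := fun mm => by
    classical
    rw [MvPolynomial.coeff_one]
    split_ifs
    exacts [K'.one_mem, K'.zero_mem]
  add_mem' := by
    intro a b ha hb mm
    rw [MvPolynomial.coeff_add]
    exact K'.add_mem (ha mm) (hb mm)
  neg_mem' := by
    intro a ha mm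
    rw [MvPolynomial.coeff_neg]
    exact K'.neg_mem (ha mm)
  mul_mem' := by
    intro a b ha hb mm
    classical
    rw [MvPolynomial.coeff_mul]
    exact Subring.sum_mem _ fun c _ => K'.mul_mem (ha c.1) (hb c.2)

private theorem mem_coeffSubring {L : Type*} [CommRing L] (K' : Subring L)
    {f : MvPolynomial (Fin 2) L} :
    f ∈ coeffSubring K' ↔ ∀ mm : Fin 2 →₀ ℕ, MvPolynomial.coeff mm f ∈ K' :=
  Iff.rfl

private theorem CXpow_mem {L : Type*} [CommRing L] (K' : Subring L) {a : L} (ha : a ∈ K')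
    (i : Fin 2) (n : ℕ) :
    (C a * X i ^ n : MvPolynomial (Fin 2) L) ∈ coeffSubring K' := by
  rw [mem_coeffSubring]
  intro mm
  classical
  rw [MvPolynomial.coeff_C_mul, MvPolynomial.coeff_X_pow]
  split_ifs
  · rw [mul_one]; exact ha
  · rw [mul_zero]; exact K'.zero_mem

private theorem C_mem {L : Type*} [CommRing L] (K' : Subring L) {a : L} (ha : a ∈ K') :
    (C a : MvPolynomial (Fin 2) L) ∈ coeffSubring K' := by
  have h := CXpow_mem K' ha 0 0
  rwa [pow_zero, mul_one] at h

private theorem X_mem {L : Type*} [CommRing L] (K' : Subring L) (i : Fin 2) :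
    (X i : MvPolynomial (Fin 2) L) ∈ coeffSubring K' := by
  have h := CXpow_mem K' K'.one_mem i 1
  rwa [map_one, one_mul, pow_one] at h

/-! ### The Witt vectors encoding the substitution -/

variable (p r) in
private noncomputable def mW {L : Type*} [CommRing L] (gs : ℕ → L) (e : ℕ) (i : Fin 2) :
    WittVector p (MvPolynomial (Fin 2) L) :=
  WittVector.mk p fun k => if k ≤ e then C (gs (e - k)) * X i ^ p ^ ((e - k) * r) else 0

private theorem mW_coeff {L : Type*} [CommRing L] (gs : ℕ → L) (e : ℕ) (i : Fin 2) (k : ℕ) :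
    (mW p r gs e i).coeff k
      = if k ≤ e then (C (gs (e - k)) * X i ^ p ^ ((e - k) * r) : MvPolynomial (Fin 2) L)
        else 0 := by
  simp [mW, WittVector.coeff_mk]

variable (p r) in
private noncomputable def MM {L : Type*} [CommRing L] (gs : ℕ → L) (e : ℕ) :
    WittVector p (MvPolynomial (Fin 2) L) :=
  mW p r gs e 0 + mW p r gs e 1

variable (p) in
private noncomputable def CwDef (L : Type*) [CommRing L] :
    WittVector p (MvPolynomial (Fin 2) L) :=
  teichmuller p (X 0) + teichmuller p (X 1)

private theorem Cw_mem {L : Type*} [CommRing L] (K' : Subring L) (j : ℕ) :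
    (CwDef p L).coeff j ∈ coeffSubring K' := by
  rw [CwDef, WittVector.add_coeff]
  apply aeval_mem
  rintro ⟨i, n⟩
  have huncurry : Function.uncurry
        ![(teichmuller p (X 0 : MvPolynomial (Fin 2) L)).coeff,
          (teichmuller p (X 1 : MvPolynomial (Fin 2) L)).coeff] (i, n)
      = (teichmuller p (X i : MvPolynomial (Fin 2) L)).coeff n := by
    fin_cases i <;> rfl
  rw [huncurry]
  cases n with
  | zero => rw [teichmuller_coeff_zero]; exact X_mem K' i
  | succ n =>
    rw [teichmuller_coeff_pos _ _ _ (Nat.succ_pos n)]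
    exact (coeffSubring K').zero_mem

/-! ### The recursion -/

private theorem mW_rec {L : Type*} [CommRing L] [CharP L p] (gs tt : ℕ → L) (h0 : gs 0 = 1)
    (H1 : ∀ e k : ℕ, k < e → gs (e - k) = tt e ^ p ^ k * gs (e - 1 - k) ^ p ^ r)
    (e : ℕ) (he : 1 ≤ e) (i : Fin 2) :
    mW p r gs e i = teichmuller p (C (tt e)) * fIter r (mW p r gs (e - 1) i)
      + vIter e (teichmuller p (X i)) := by
  have hploc : (p : ℕ) ^ r ≠ 0 := pow_ne_zero _ hp.out.ne_zero
  have hterm2 : ∀ n, (vIter e (teichmuller p (X i : MvPolynomial (Fin 2) L))).coeff n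
      = if n = e then (X i : MvPolynomial (Fin 2) L) else 0 := by
    intro n
    rcases lt_trichotomy n e with h | h | h
    · rw [vIter_coeff_lt e n h, if_neg (Nat.ne_of_lt h)]
    · subst h
      have h := vIter_coeff_add n 0 (teichmuller p (X i : MvPolynomial (Fin 2) L))
      rw [Nat.add_zero] at h
      rw [h, teichmuller_coeff_zero, if_pos rfl]
    · obtain ⟨j, rfl⟩ : ∃ j, n = e + (j + 1) := ⟨n - e - 1, by omega⟩
      rw [vIter_coeff_add, teichmuller_coeff_pos _ _ _ (Nat.succ_pos j), if_neg (by omega)]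
  have hterm1 : ∀ n,
      (teichmuller p (C (tt e) : MvPolynomial (Fin 2) L) * fIter r (mW p r gs (e - 1) i)).coeff n
      = (C (tt e) : MvPolynomial (Fin 2) L) ^ p ^ n * ((mW p r gs (e - 1) i).coeff n) ^ p ^ r := by
    intro n; rw [teichmuller_mul_coeff, fIter_coeff]
  have hm1 : ∀ n, ¬ n ≤ e - 1 → (mW p r gs (e - 1) i).coeff n = 0 := by
    intro n hn; rw [mW_coeff, if_neg hn]
  have hdisj : ∀ n,
      (teichmuller p (C (tt e) : MvPolynomial (Fin 2) L) * fIter r (mW p r gs (e - 1) i)).coeff n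
        = 0 ∨ (vIter e (teichmuller p (X i : MvPolynomial (Fin 2) L))).coeff n = 0 := by
    intro n
    by_cases h : n = e
    · left
      rw [hterm1, h, hm1 e (by omega), zero_pow hploc, mul_zero]
    · right
      rw [hterm2, if_neg h]
  ext k
  rw [coeff_add_of_disjoint k _ _ hdisj, hterm1, hterm2]
  rcases lt_trichotomy k e with h | h | h
  · rw [if_neg (Nat.ne_of_lt h), add_zero, mW_coeff, mW_coeff, if_pos (Nat.le_of_lt h),
      if_pos (by omega : k ≤ e - 1)]
    obtain ⟨a, ha⟩ : ∃ a, e - k = a + 1 := ⟨e - k - 1, by omega⟩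
    have hsub : e - 1 - k = a := by omega
    rw [H1 e k h, hsub, ha, mul_pow, ← map_pow, ← map_pow, ← pow_mul (X i), ← pow_add,
      map_mul]
    have harith : a * r + r = (a + 1) * r := by ring
    rw [harith]
    ring
  · subst h
    rw [if_pos rfl, hm1 k (by omega), zero_pow hploc, mul_zero, zero_add, mW_coeff,
      if_pos le_rfl, Nat.sub_self, h0, map_one, one_mul, Nat.zero_mul, pow_zero, pow_one]
  · rw [if_neg (by omega), add_zero, mW_coeff, if_neg (by omega), hm1 k (by omega),
      zero_pow hploc, mul_zero]

private theorem MM_rec {L : Type*} [CommRing L] [CharP L p] (gs tt : ℕ → L) (h0 : gs 0 = 1)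
    (H1 : ∀ e k : ℕ, k < e → gs (e - k) = tt e ^ p ^ k * gs (e - 1 - k) ^ p ^ r)
    (e : ℕ) (he : 1 ≤ e) :
    MM p r gs e = teichmuller p (C (tt e)) * fIter r (MM p r gs (e - 1)) + vIter e (CwDef p L) := by
  rw [MM, MM, CwDef, mW_rec gs tt h0 H1 e he 0, mW_rec gs tt h0 H1 e he 1, fIter_add, mul_add,
    vIter_add]
  ring

private theorem shiftW_MM_rec {L : Type*} [CommRing L] [CharP L p] (gs tt : ℕ → L)
    (h0 : gs 0 = 1)
    (H1 : ∀ e k : ℕ, k < e → gs (e - k) = tt e ^ p ^ k * gs (e - 1 - k) ^ p ^ r)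
    (e : ℕ) (he : 1 ≤ e) :
    shiftW e (MM p r gs e)
      = teichmuller p (C (tt e ^ p ^ e)) * fIter r (shiftW e (MM p r gs (e - 1))) + CwDef p L := by
  have h5 : shiftW e (vIter e (CwDef p L)) = CwDef p L := by
    ext n; rw [shiftW_coeff, vIter_coeff_add]
  have h6 : shiftW e (teichmuller p (C (tt e)) * fIter r (MM p r gs (e - 1)))
      = teichmuller p (C (tt e ^ p ^ e) : MvPolynomial (Fin 2) L)
          * fIter r (shiftW e (MM p r gs (e - 1))) := by
    ext n
    rw [shiftW_coeff, teichmuller_mul_coeff, fIter_coeff, teichmuller_mul_coeff, fIter_coeff,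
      shiftW_coeff]
    have hpow : (C (tt e) : MvPolynomial (Fin 2) L) ^ p ^ (e + n)
        = (C (tt e ^ p ^ e) : MvPolynomial (Fin 2) L) ^ p ^ n := by
      rw [← map_pow, ← map_pow, ← pow_mul, ← pow_add]
    rw [hpow]
  ext j
  rw [shiftW_coeff, MM_rec gs tt h0 H1 e he,
    add_coeff_shift e _ _ (fun k hk => vIter_coeff_lt e k hk _) j, h5, h6]

/-! ### Membership -/

private theorem mem_main {L : Type*} [CommRing L] [CharP L p] (K' : Subring L)
    (gs tt : ℕ → L) (h0 : gs 0 = 1)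
    (H1 : ∀ e k : ℕ, k < e → gs (e - k) = tt e ^ p ^ k * gs (e - 1 - k) ^ p ^ r)
    (H2 : ∀ e : ℕ, 1 ≤ e → tt e ^ p ^ e ∈ K') :
    ∀ e j, (shiftW e (MM p r gs e)).coeff j ∈ coeffSubring K' := by
  intro e
  induction e with
  | zero =>
    intro j
    rw [shiftW_coeff, Nat.zero_add, MM, WittVector.add_coeff]
    apply aeval_mem
    rintro ⟨i, n⟩
    have huncurry : Function.uncurry
          ![(mW p r gs 0 0).coeff, (mW p r gs 0 1).coeff] (i, n)
        = (mW p r gs 0 i).coeff n := by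
      fin_cases i <;> rfl
    rw [huncurry, mW_coeff]
    split_ifs with hn
    · have h00 : gs (0 - n) ∈ K' := by
        rw [Nat.zero_sub, h0]; exact K'.one_mem
      exact CXpow_mem K' h00 i _
    · exact (coeffSubring K').zero_mem
  | succ e ih =>
    intro j
    have hrec := shiftW_MM_rec gs tt h0 H1 (e + 1) (by omega)
    rw [Nat.add_sub_cancel] at hrec
    rw [hrec, WittVector.add_coeff]
    apply aeval_mem
    rintro ⟨i, n⟩
    have huncurry : Function.uncurry
          ![(teichmuller p (C (tt (e + 1) ^ p ^ (e + 1)) : MvPolynomial (Fin 2) L)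
              * fIter r (shiftW (e + 1) (MM p r gs e))).coeff,
            (CwDef p L).coeff] (i, n)
        = if i = 0 then
            (teichmuller p (C (tt (e + 1) ^ p ^ (e + 1)) : MvPolynomial (Fin 2) L)
              * fIter r (shiftW (e + 1) (MM p r gs e))).coeff n
          else (CwDef p L).coeff n := by
      fin_cases i <;> rfl
    rw [huncurry]
    split_ifs with hi
    · rw [teichmuller_mul_coeff, fIter_coeff]
      have hidx : (shiftW (e + 1) (MM p r gs e)).coeff n
          = (shiftW e (MM p r gs e)).coeff (1 + n) := by
        rw [shiftW_coeff, shiftW_coeff]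
        congr 1
        omega
      rw [hidx]
      exact (coeffSubring K').mul_mem
        ((coeffSubring K').pow_mem (C_mem K' (H2 (e + 1) (by omega))) _)
        ((coeffSubring K').pow_mem (ih (1 + n)) _)
    · exact Cw_mem K' n

/-! ### The abstract main theorem -/

private theorem aux (p r d : ℕ) [hpx : Fact p.Prime] {L : Type*} [CommRing L] [CharP L p]
    (K' : Subring L) (gs tt : ℕ → L) (h0 : gs 0 = 1)
    (H1 : ∀ e k : ℕ, k < e → gs (e - k) = tt e ^ p ^ k * gs (e - 1 - k) ^ p ^ r)
    (H2 : ∀ e : ℕ, 1 ≤ e → tt e ^ p ^ e ∈ K') :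
    ∀ m : Fin 2 →₀ ℕ,
      MvPolynomial.coeff m
        (aeval
          (fun v : Fin 2 × ℕ =>
            (C (gs (d - v.2)) * X v.1 ^ p ^ ((d - v.2) * r) : MvPolynomial (Fin 2) L))
          (WittVector.wittAdd p d)) ∈ K' := by
  intro m
  have hfin := mem_main K' gs tt h0 H1 H2 d 0
  rw [shiftW_coeff, Nat.add_zero, mem_coeffSubring] at hfin
  have hconn : (MM p r gs d).coeff d
      = aeval
          (fun v : Fin 2 × ℕ =>
            (C (gs (d - v.2)) * X v.1 ^ p ^ ((d - v.2) * r) : MvPolynomial (Fin 2) L))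
          (WittVector.wittAdd p d) := by
    rw [MM, WittVector.add_coeff]
    simp only [WittVector.peval]
    rw [MvPolynomial.aeval_def,
      MvPolynomial.aeval_def]
    apply MvPolynomial.eval₂_congr
    intro i c hic hc
    have hvars : i ∈ (WittVector.wittAdd p d).vars :=
      (MvPolynomial.mem_vars i).mpr ⟨c, MvPolynomial.mem_support_iff.mpr hc, hic⟩
    have hi2 : i.2 ≤ d := by
      have h := WittVector.wittAdd_vars p d hvars
      simp only [Finset.mem_product, Finset.mem_range] at h
      omega
    obtain ⟨i1, i2⟩ := i
    have huncurry : (Function.uncurry ![(mW p r gs d 0).coeff, (mW p r gs d 1).coeff]) (i1, i2)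
        = (mW p r gs d i1).coeff i2 := by
      fin_cases i1 <;> rfl
    rw [huncurry, mW_coeff, if_pos hi2]
  rw [← hconn]
  exact hfin m

end WittSubstAux


section Final

open WittSubstAux

private theorem symm_pow_iter (L : Type*) [CommSemiring L] (p : ℕ) [ExpChar L p]
    [PerfectRing L p] (a : ℕ) (x : L) :
    ((frobeniusEquiv L p).symm)^[a] x ^ p ^ a = x := by
  induction a generalizing x with
  | zero => simp
  | succ a ih =>
    rw [Function.iterate_succ_apply, pow_succ, pow_mul, ih, frobeniusEquiv_symm_pow_p]


open MvPolynomial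

/-- Integrality lemma: let `K ⊆ L` with `L` perfect of characteristic `p`,
`g ∈ L` with `g^p ∈ K`, and let `g_0 = 1`, `g_1 = g`,
`g_i = g^{p^{1-i}} g_{i-1}^{p^r}` (inverse Frobenius encoding the fractional power).
Then the bivariate polynomial
`S_d((g_d u^{p^{dr}},…,g_1 u^{p^r}, u); (g_d v^{p^{dr}},…,g_1 v^{p^r}, v))`
(obtained by substituting `g_{d-i}·w^{p^{(d-i)r}}` for the `i`-th Witt coordinate,
`w ∈ {u,v}`) has all of its coefficients in `K`. -/
theorem witt_add_substitution_coeffs_mem (p r d : ℕ) [Fact p.Prime] (hr : 1 ≤ r)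
    (K L : Type*) [Field K] [Field L] [Algebra K L] [ExpChar L p] [PerfectRing L p]
    (g : L) (hg : g ^ p ∈ (algebraMap K L).range)
    (gs : ℕ → L) (h0 : gs 0 = 1) (h1 : gs 1 = g)
    (hrec : ∀ i, 2 ≤ i →
      gs i = ((frobeniusEquiv L p).symm)^[i - 1] g * (gs (i - 1)) ^ p ^ r) :
    ∀ m : Fin 2 →₀ ℕ,
      MvPolynomial.coeff m
        (aeval
          (fun v : Fin 2 × ℕ =>
            (C (gs (d - v.2)) * X v.1 ^ p ^ ((d - v.2) * r) : MvPolynomial (Fin 2) L))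
          (WittVector.wittAdd p d)) ∈ (algebraMap K L).range := by

  haveI hcharP : CharP L p := by
    cases ‹ExpChar L p› with
    | zero => exact absurd (Fact.out : Nat.Prime 1) (by norm_num)
    | prime h => assumption
  set K' : Subring L := (algebraMap K L).range with hK'
  set tt : ℕ → L := fun e => ((frobeniusEquiv L p).symm)^[e - 1] g with htt
  have hgs : ∀ i : ℕ, 1 ≤ i →
      gs i = ((frobeniusEquiv L p).symm)^[i - 1] g * gs (i - 1) ^ p ^ r := by
    intro i hi
    rcases eq_or_lt_of_le hi with h | h
    · rw [← h]
      simp [h1, h0]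
    · exact hrec i h
  have H1 : ∀ e k : ℕ, k < e → gs (e - k) = tt e ^ p ^ k * gs (e - 1 - k) ^ p ^ r := by
    intro e k hk
    have hpow : tt e ^ p ^ k = ((frobeniusEquiv L p).symm)^[e - k - 1] g := by
      have hsplit : e - 1 = k + (e - k - 1) := by omega
      rw [htt]
      simp only
      rw [hsplit, Function.iterate_add_apply, symm_pow_iter]
    have hidx : e - 1 - k = e - k - 1 := by omega
    rw [hpow, hidx]
    exact hgs (e - k) (by omega)
  have H2 : ∀ e : ℕ, 1 ≤ e → tt e ^ p ^ e ∈ K' := by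
    intro e he
    have hpe : p ^ e = p ^ (e - 1) * p := by
      rw [← pow_succ]
      congr 1
      omega
    rw [htt]
    simp only
    rw [hpe, pow_mul, symm_pow_iter]
    exact hg
  exact WittSubstAux.aux p r d K' gs tt h0 H1 H2

end Final
end

section
/- Let n > r > 0 and f, f' ∈ K^× for a field K of characteristic p. If f/f' ∈ (K^×)^{p^{r+1}-1}, then the Hopf algebras H_{n,r,f} and H_{n,r,f'} are isomorphic as K-Hopf algebras, via t ↦ g t where g^{p^{r+1}-1} = f'/f. -/
open MvPolynomial TensorProduct

section HnrfAux

open Finset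

lemma HnrfAux.ringHom_aeval_int {σ S T : Type*} [CommRing S] [CommRing T]
    [Algebra ℤ S] [Algebra ℤ T]
    (φ : S →+* T) (g : σ → S) (P : MvPolynomial σ ℤ) :
    φ (aeval g P) = aeval (fun i => φ (g i)) P := by
  induction P using MvPolynomial.induction_on with
  | C a => simp [aeval_C, algebraMap_int_eq, map_intCast, eq_intCast]
  | add p q hp hq => simp [map_add, hp, hq]
  | mul_X p i hp => simp [map_mul, hp]

lemma HnrfAux.algHom_aeval_int {σ R' S T : Type*} [CommRing R'] [CommRing S] [CommRing T]
    [Algebra R' S] [Algebra R' T] [Algebra ℤ S] [Algebra ℤ T] (φ : S →ₐ[R'] T) (g : σ → S) (P : MvPolynomial σ ℤ) :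
    φ (aeval g P) = aeval (fun i => φ (g i)) P :=
  HnrfAux.ringHom_aeval_int (φ : S →+* T) g P

lemma HnrfAux.map_aeval_CX {σ K L : Type*} [CommRing K] [CommRing L] (φ : K →+* L)
    (a : K) (P : MvPolynomial σ K) :
    MvPolynomial.map φ (aeval (fun i => C a * X i) P)
      = aeval (fun i => C (φ a) * X i) (MvPolynomial.map φ P) := by
  induction P using MvPolynomial.induction_on with
  | C b => simp [aeval_C]
  | add p q hp hq => simp only [map_add, hp, hq]
  | mul_X p i hp =>
    simp only [map_mul, hp, aeval_X, MvPolynomial.map_X, MvPolynomial.map_C]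

lemma HnrfAux.ghost_eq (p : ℕ) [Fact p.Prime] (A : Type*) [CommRing A] [Algebra ℚ A]
    (c : A) (xs : Fin 2 × ℕ → A) (m : ℕ) :
    (aeval (fun k => aeval (fun v : Fin 2 × ℕ => c ^ p ^ v.2 * xs v) (WittVector.wittAdd p k))
        (wittPolynomial p ℤ m) : A)
      = aeval (fun k => c ^ p ^ k * aeval xs (WittVector.wittAdd p k))
          (wittPolynomial p ℤ m) := by
  have hterm : ∀ j ∈ Finset.range (m+1), ∀ y : A,
      (p:A)^j * (c ^ p ^ j * y) ^ p ^ (m - j) = c ^ p ^ m * ((p:A)^j * y ^ p ^ (m-j)) := by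
    intro j hj y
    have hjm : j ≤ m := Nat.lt_succ_iff.mp (Finset.mem_range.mp hj)
    rw [mul_pow, ← pow_mul, ← pow_add, Nat.add_sub_cancel' hjm]
    ring
  have hsum : ∀ ys : Fin 2 × ℕ → A, ∀ i : Fin 2,
      aeval (fun j => c ^ p ^ j * ys (i, j)) (wittPolynomial p ℤ m)
        = c ^ p ^ m * aeval (fun j => ys (i, j)) (wittPolynomial p ℤ m) := by
    intro ys i
    rw [aeval_wittPolynomial, aeval_wittPolynomial, Finset.mul_sum]
    exact Finset.sum_congr rfl fun j hj => hterm j hj _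
  have key : ∀ zs : Fin 2 × ℕ → A,
      aeval (fun k => aeval zs (WittVector.wittAdd p k)) (wittPolynomial p ℤ m)
        = aeval (fun j => zs (0, j)) (wittPolynomial p ℤ m)
          + aeval (fun j => zs (1, j)) (wittPolynomial p ℤ m) := by
    intro zs
    rw [← aeval_bind₁]
    show aeval zs (bind₁ (wittStructureInt p (X 0 + X 1)) (wittPolynomial p ℤ m)) = _
    rw [wittStructureInt_prop, aeval_bind₁, map_add, aeval_X, aeval_X, aeval_rename,
      aeval_rename]
    rfl
  rw [key]
  have hR : aeval (fun k => c ^ p ^ k * aeval xs (WittVector.wittAdd p k))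
      (wittPolynomial p ℤ m)
      = c ^ p ^ m * aeval (fun k => aeval xs (WittVector.wittAdd p k))
          (wittPolynomial p ℤ m) := by
    rw [aeval_wittPolynomial, aeval_wittPolynomial, Finset.mul_sum]
    exact Finset.sum_congr rfl fun j hj => hterm j hj _
  rw [hR, key, hsum, hsum, mul_add]

lemma HnrfAux.witt_scale_rat (p : ℕ) [Fact p.Prime] (A : Type*) [CommRing A] [Algebra ℚ A]
    (c : A) (xs : Fin 2 × ℕ → A) (n : ℕ) :
    MvPolynomial.aeval (fun v : Fin 2 × ℕ => c ^ p ^ v.2 * xs v) (WittVector.wittAdd p n)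
      = c ^ p ^ n * MvPolynomial.aeval xs (WittVector.wittAdd p n) := by
  induction n using Nat.strong_induction_on with
  | _ n ih =>
  have g := HnrfAux.ghost_eq p A c xs n
  rw [aeval_wittPolynomial, aeval_wittPolynomial, Finset.sum_range_succ,
    Finset.sum_range_succ] at g
  have hpre : ∀ k ∈ Finset.range n,
      (p:A)^k * (aeval (fun v : Fin 2 × ℕ => c ^ p ^ v.2 * xs v)
          (WittVector.wittAdd p k)) ^ p ^ (n - k)
        = (p:A)^k * (c ^ p ^ k * aeval xs (WittVector.wittAdd p k)) ^ p ^ (n - k) := by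
    intro k hk
    rw [ih k (Finset.mem_range.mp hk)]
  rw [Finset.sum_congr rfl hpre] at g
  have g2 : (p:A)^n * (aeval (fun v : Fin 2 × ℕ => c ^ p ^ v.2 * xs v)
        (WittVector.wittAdd p n)) ^ p ^ (n - n)
      = (p:A)^n * (c ^ p ^ n * aeval xs (WittVector.wittAdd p n)) ^ p ^ (n - n) :=
    add_left_cancel g
  rw [Nat.sub_self, pow_zero, pow_one, pow_one] at g2
  have hsmul : ∀ x : A, (p:A)^n * x = ((p:ℚ)^n) • x := by
    intro x
    rw [Algebra.smul_def, map_pow, map_natCast]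
  rw [hsmul, hsmul] at g2
  have hp0 : ((p:ℚ)^n) ≠ 0 := by
    exact pow_ne_zero _ (Nat.cast_ne_zero.mpr (Fact.out : p.Prime).ne_zero)
  calc aeval (fun v : Fin 2 × ℕ => c ^ p ^ v.2 * xs v) (WittVector.wittAdd p n)
      = ((p:ℚ)^n)⁻¹ • (((p:ℚ)^n) • aeval (fun v : Fin 2 × ℕ => c ^ p ^ v.2 * xs v)
          (WittVector.wittAdd p n)) := by rw [inv_smul_smul₀ hp0]
    _ = ((p:ℚ)^n)⁻¹ • (((p:ℚ)^n) • (c ^ p ^ n * aeval xs (WittVector.wittAdd p n))) := by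
          rw [g2]
    _ = c ^ p ^ n * aeval xs (WittVector.wittAdd p n) := by rw [inv_smul_smul₀ hp0]

lemma HnrfAux.witt_scale (p : ℕ) [Fact p.Prime] (R : Type*) [CommRing R] [Algebra ℤ R]
    (c : R) (xs : Fin 2 × ℕ → R) (n : ℕ) :
    aeval (fun v : Fin 2 × ℕ => c ^ p ^ v.2 * xs v) (WittVector.wittAdd p n)
      = c ^ p ^ n * aeval xs (WittVector.wittAdd p n) := by
  have hU : (aeval (fun v : Fin 2 × ℕ =>
        (X none : MvPolynomial (Option (Fin 2 × ℕ)) ℤ) ^ p ^ v.2 * X (some v))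
        (WittVector.wittAdd p n))
      = X none ^ p ^ n * aeval (fun v : Fin 2 × ℕ =>
          (X (some v) : MvPolynomial (Option (Fin 2 × ℕ)) ℤ)) (WittVector.wittAdd p n) := by
    apply MvPolynomial.map_injective (Int.castRingHom ℚ) Int.cast_injective
    have h := HnrfAux.witt_scale_rat p (MvPolynomial (Option (Fin 2 × ℕ)) ℚ)
      (X none) (fun v => X (some v)) n
    rw [map_mul, map_pow, map_X, @HnrfAux.ringHom_aeval_int _ _ _ _ _ _ (Ring.toIntAlgebra _),
      @HnrfAux.ringHom_aeval_int _ _ _ _ _ _ (Ring.toIntAlgebra _)]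
    simpa using h
  have h2 := congrArg (⇑(aeval (fun o : Option (Fin 2 × ℕ) => o.elim c xs) :
        MvPolynomial (Option (Fin 2 × ℕ)) ℤ →ₐ[ℤ] R)) hU
  rw [HnrfAux.algHom_aeval_int, map_mul, map_pow, aeval_X, HnrfAux.algHom_aeval_int] at h2
  simpa using h2

lemma HnrfAux.key_scale (p r : ℕ) [Fact p.Prime]
    (K L : Type*) [Field K] [Field L] [Algebra K L]
    [ExpChar L p] [PerfectRing L p]
    (f f' g : K)
    (hquot : g ^ (p ^ (r + 1) - 1) * f = f')
    (fs fs' : ℕ → L) (hfs0 : fs 0 = 1) (hfs0' : fs' 0 = 1)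
    (hfs1 : fs 1 = (frobeniusEquiv L p).symm (algebraMap K L f))
    (hfs1' : fs' 1 = (frobeniusEquiv L p).symm (algebraMap K L f'))
    (hfsrec : ∀ i, 2 ≤ i →
      fs i = ((frobeniusEquiv L p).symm)^[i] (algebraMap K L f) * (fs (i - 1)) ^ p ^ r)
    (hfsrec' : ∀ i, 2 ≤ i →
      fs' i = ((frobeniusEquiv L p).symm)^[i] (algebraMap K L f') * (fs' (i - 1)) ^ p ^ r) :
    ∀ i, (⇑(frobeniusEquiv L p).symm)^[i] (algebraMap K L g) * fs' i
      = fs i * (algebraMap K L g) ^ p ^ (i * r) := by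
  have hφmul : ∀ (i : ℕ) (a b : L),
      (⇑(frobeniusEquiv L p).symm)^[i] (a * b)
        = (⇑(frobeniusEquiv L p).symm)^[i] a * (⇑(frobeniusEquiv L p).symm)^[i] b := by
    intro i
    induction i with
    | zero => simp
    | succ i ih => intro a b; simp [Function.iterate_succ_apply', ih]
  have hφpow : ∀ (i m : ℕ) (a : L),
      (⇑(frobeniusEquiv L p).symm)^[i] (a ^ m) = ((⇑(frobeniusEquiv L p).symm)^[i] a) ^ m := by
    intro i m
    induction i with
    | zero => simp
    | succ i ih => intro a; simp [Function.iterate_succ_apply', ih]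
  have hstep : ∀ (i : ℕ) (a : L),
      ((⇑(frobeniusEquiv L p).symm)^[i+1] a) ^ p = (⇑(frobeniusEquiv L p).symm)^[i] a := by
    intro i a
    rw [Function.iterate_succ_apply', frobeniusEquiv_symm_pow_p]
  have hF' : algebraMap K L f'
      = (algebraMap K L g) ^ (p ^ (r+1) - 1) * algebraMap K L f := by
    rw [← hquot, map_mul, map_pow]
  have hxx : ∀ x : L, x * x ^ (p ^ (r+1) - 1) = x ^ p ^ (r+1) := by
    intro x
    rw [← pow_succ']
    congr 1
    have : 0 < p ^ (r+1) := pow_pos (Fact.out : p.Prime).pos _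
    omega
  intro i
  induction i with
  | zero => simp [hfs0, hfs0']
  | succ i ih =>
    rcases i with _ | i
    · rw [hfs1', hfs1, Function.iterate_one, ← map_mul, hF']
      rw [show (algebraMap K L g) * ((algebraMap K L g) ^ (p ^ (r+1) - 1) * algebraMap K L f)
          = (algebraMap K L g) ^ p ^ (r+1) * algebraMap K L f from by
        rw [← mul_assoc, hxx]]
      rw [map_mul, map_pow]
      rw [show p ^ (r+1) = p * p ^ r from by ring]
      rw [pow_mul, frobeniusEquiv_symm_pow_p, zero_add, one_mul, mul_comm]
    · have e1 : fs' (i+2)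
          = ((⇑(frobeniusEquiv L p).symm)^[i+2] (algebraMap K L g)) ^ (p ^ (r+1) - 1)
            * (⇑(frobeniusEquiv L p).symm)^[i+2] (algebraMap K L f)
            * fs' (i+1) ^ p ^ r := by
        rw [hfsrec' (i+2) (by omega), show (i+2) - 1 = i + 1 from rfl, hF', hφmul, hφpow]
      have e2 : (⇑(frobeniusEquiv L p).symm)^[i+2] (algebraMap K L g)
            * ((⇑(frobeniusEquiv L p).symm)^[i+2] (algebraMap K L g)) ^ (p ^ (r+1) - 1)
          = ((⇑(frobeniusEquiv L p).symm)^[i+1] (algebraMap K L g)) ^ p ^ r := by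
        rw [hxx, show p ^ (r+1) = p * p ^ r from by ring, pow_mul, hstep]
      have e3 : ((⇑(frobeniusEquiv L p).symm)^[i+1] (algebraMap K L g)) ^ p ^ r
            * fs' (i+1) ^ p ^ r
          = fs (i+1) ^ p ^ r * (algebraMap K L g) ^ p ^ ((i+1) * r + r) := by
        rw [← mul_pow, ih, mul_pow, ← pow_mul, ← pow_add]
      have e4 : fs (i+2)
          = (⇑(frobeniusEquiv L p).symm)^[i+2] (algebraMap K L f) * fs (i+1) ^ p ^ r :=
        hfsrec (i+2) (by omega)
      calc (⇑(frobeniusEquiv L p).symm)^[i+2] (algebraMap K L g) * fs' (i+2)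
          = ((⇑(frobeniusEquiv L p).symm)^[i+2] (algebraMap K L g)
              * ((⇑(frobeniusEquiv L p).symm)^[i+2] (algebraMap K L g)) ^ (p ^ (r+1) - 1))
            * ((⇑(frobeniusEquiv L p).symm)^[i+2] (algebraMap K L f) * fs' (i+1) ^ p ^ r) := by
            rw [e1]; ring
        _ = (⇑(frobeniusEquiv L p).symm)^[i+2] (algebraMap K L f)
            * (((⇑(frobeniusEquiv L p).symm)^[i+1] (algebraMap K L g)) ^ p ^ r
              * fs' (i+1) ^ p ^ r) := by rw [e2]; ring
        _ = (⇑(frobeniusEquiv L p).symm)^[i+2] (algebraMap K L f)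
            * (fs (i+1) ^ p ^ r * (algebraMap K L g) ^ p ^ ((i+1) * r + r)) := by rw [e3]
        _ = fs (i+2) * (algebraMap K L g) ^ p ^ ((i+2) * r) := by
            rw [e4, show (i+2) * r = (i+1) * r + r from by ring]; ring

lemma HnrfAux.Lid (p r d : ℕ) [Fact p.Prime]
    (K L : Type*) [Field K] [Field L] [Algebra K L]
    [ExpChar L p] [PerfectRing L p]
    (g : K)
    (fs fs' : ℕ → L)
    (key : ∀ i, (⇑(frobeniusEquiv L p).symm)^[i] (algebraMap K L g) * fs' i
      = fs i * (algebraMap K L g) ^ p ^ (i * r)) :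
    aeval (fun v : Fin 2 × ℕ =>
        (C (fs (d - v.2)) * (C (algebraMap K L g) * X v.1) ^ p ^ ((d - v.2) * r)
          : MvPolynomial (Fin 2) L)) (WittVector.wittAdd p d)
      = C (algebraMap K L g) * aeval (fun v : Fin 2 × ℕ =>
          (C (fs' (d - v.2)) * X v.1 ^ p ^ ((d - v.2) * r) : MvPolynomial (Fin 2) L))
          (WittVector.wittAdd p d) := by
  have hstep : ∀ (i : ℕ) (a : L),
      ((⇑(frobeniusEquiv L p).symm)^[i+1] a) ^ p = (⇑(frobeniusEquiv L p).symm)^[i] a := by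
    intro i a
    rw [Function.iterate_succ_apply', frobeniusEquiv_symm_pow_p]
  have hppk : ∀ (k i : ℕ) (a : L),
      ((⇑(frobeniusEquiv L p).symm)^[k + i] a) ^ p ^ k = (⇑(frobeniusEquiv L p).symm)^[i] a := by
    intro k
    induction k with
    | zero => intro i a; simp
    | succ k ih =>
      intro i a
      rw [show k + 1 + i = (k + i) + 1 from by omega, show p ^ (k+1) = p * p ^ k from by ring,
        pow_mul, hstep, ih]
  have hpt : ∀ (k : ℕ), k ≤ d → ∀ j : Fin 2,
      (C (fs (d - k)) * (C (algebraMap K L g) * X j) ^ p ^ ((d - k) * r)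
        : MvPolynomial (Fin 2) L)
      = (C ((⇑(frobeniusEquiv L p).symm)^[d] (algebraMap K L g))) ^ p ^ k
          * (C (fs' (d - k)) * X j ^ p ^ ((d - k) * r)) := by
    intro k hk j
    have h0 := hppk k (d - k) (algebraMap K L g)
    rw [Nat.add_sub_cancel' hk] at h0
    have h1 : ((C ((⇑(frobeniusEquiv L p).symm)^[d] (algebraMap K L g))
        : MvPolynomial (Fin 2) L)) ^ p ^ k
        = C ((⇑(frobeniusEquiv L p).symm)^[d - k] (algebraMap K L g)) := by
      rw [← map_pow, h0]
    rw [h1, mul_pow, ← map_pow, ← mul_assoc, ← mul_assoc, ← map_mul, ← map_mul,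
      ← key (d - k)]
  have hcongr : aeval (fun v : Fin 2 × ℕ =>
        (C (fs (d - v.2)) * (C (algebraMap K L g) * X v.1) ^ p ^ ((d - v.2) * r)
          : MvPolynomial (Fin 2) L)) (WittVector.wittAdd p d)
      = aeval (fun v : Fin 2 × ℕ =>
          (C ((⇑(frobeniusEquiv L p).symm)^[d] (algebraMap K L g))
            : MvPolynomial (Fin 2) L) ^ p ^ v.2
          * (C (fs' (d - v.2)) * X v.1 ^ p ^ ((d - v.2) * r))) (WittVector.wittAdd p d) := by
    rw [aeval_def, aeval_def]
    apply eval₂_congr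
    intro i c hic hc0
    have hiv : i ∈ (WittVector.wittAdd p d).vars :=
      (mem_vars i).mpr ⟨c, mem_support_iff.mpr hc0, hic⟩
    have h2 := WittVector.wittAdd_vars p d hiv
    rw [Finset.mem_product, Finset.mem_range] at h2
    exact hpt i.2 (Nat.lt_succ_iff.mp h2.2) i.1
  rw [hcongr, HnrfAux.witt_scale, ← map_pow]
  congr 1
  have h3 := hppk d 0 (algebraMap K L g)
  rw [Nat.add_zero] at h3
  rw [h3, Function.iterate_zero_apply]

end HnrfAux

/-- The `K`-algebra `K[t]/(t^{p^n})`. -/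
abbrev TruncPoly (K : Type*) [Field K] (p n : ℕ) : Type _ :=
  AdjoinRoot (Polynomial.X ^ p ^ n : Polynomial K)

/-- If `f/f' ∈ (K^×)^{p^{r+1}-1}`, say `g^{p^{r+1}-1} = f'/f`, then the Hopf
algebras `H_{n,r,f}` and `H_{n,r,f'}` are isomorphic via `t ↦ g t`:  given the
comultiplications `Δ_f`, `Δ_{f'}` (algebra maps with `Δ(t)` the descended
Witt-vector expression for the respective parameter), there is a `K`-algebra
isomorphism `e` with `e(t) = g·t` which is a coalgebra (hence Hopf algebra)
morphism: `(e ⊗ e) ∘ Δ_f = Δ_{f'} ∘ e` and `ε' ∘ e = ε`. -/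
theorem Hnrf_iso_of_quotient_power (p n r d : ℕ) [Fact p.Prime]
    (hn : r < n) (hr : 0 < r) (hd : d = (n + r - 1) / r - 1)
    (K L : Type*) [Field K] [CharP K p] [Field L] [Algebra K L]
    [ExpChar L p] [PerfectRing L p] [IsPurelyInseparable K L]
    (f f' g : K) (hf : f ≠ 0) (hf' : f' ≠ 0) (hg : g ≠ 0)
    (hquot : g ^ (p ^ (r + 1) - 1) * f = f')
    (fs fs' : ℕ → L) (hfs0 : fs 0 = 1) (hfs0' : fs' 0 = 1)
    (hfs1 : fs 1 = (frobeniusEquiv L p).symm (algebraMap K L f))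
    (hfs1' : fs' 1 = (frobeniusEquiv L p).symm (algebraMap K L f'))
    (hfsrec : ∀ i, 2 ≤ i →
      fs i = ((frobeniusEquiv L p).symm)^[i] (algebraMap K L f) * (fs (i - 1)) ^ p ^ r)
    (hfsrec' : ∀ i, 2 ≤ i →
      fs' i = ((frobeniusEquiv L p).symm)^[i] (algebraMap K L f') * (fs' (i - 1)) ^ p ^ r)
    (P P' : MvPolynomial (Fin 2) K)
    (hP : MvPolynomial.map (algebraMap K L) P =
      aeval (fun v : Fin 2 × ℕ =>
        (C (fs (d - v.2)) * X v.1 ^ p ^ ((d - v.2) * r) : MvPolynomial (Fin 2) L))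
        (WittVector.wittAdd p d))
    (hP' : MvPolynomial.map (algebraMap K L) P' =
      aeval (fun v : Fin 2 × ℕ =>
        (C (fs' (d - v.2)) * X v.1 ^ p ^ ((d - v.2) * r) : MvPolynomial (Fin 2) L))
        (WittVector.wittAdd p d))
    (Δf Δf' : TruncPoly K p n →ₐ[K] TruncPoly K p n ⊗[K] TruncPoly K p n)
    (εf εf' : TruncPoly K p n →ₐ[K] K)
    (hΔf : Δf (AdjoinRoot.root _) =
      MvPolynomial.aeval
        ![(AdjoinRoot.root _ : TruncPoly K p n) ⊗ₜ[K] 1,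
          1 ⊗ₜ[K] (AdjoinRoot.root _ : TruncPoly K p n)] P)
    (hΔf' : Δf' (AdjoinRoot.root _) =
      MvPolynomial.aeval
        ![(AdjoinRoot.root _ : TruncPoly K p n) ⊗ₜ[K] 1,
          1 ⊗ₜ[K] (AdjoinRoot.root _ : TruncPoly K p n)] P')
    (hεf : εf (AdjoinRoot.root _) = 0) (hεf' : εf' (AdjoinRoot.root _) = 0) :
    ∃ e : TruncPoly K p n ≃ₐ[K] TruncPoly K p n,
      e (AdjoinRoot.root _) = algebraMap K (TruncPoly K p n) g * AdjoinRoot.root _ ∧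
      (∀ h, (Algebra.TensorProduct.map e.toAlgHom e.toAlgHom) (Δf h) = Δf' (e h)) ∧
      (∀ h, εf' (e h) = εf h) := by
  classical
  -- Step 1: the key relation between the two coefficient sequences
  have key := HnrfAux.key_scale p r K L f f' g hquot fs fs' hfs0 hfs0' hfs1 hfs1'
    hfsrec hfsrec'
  -- Step 2: the scaled Witt-addition identity over `L`
  have hLid := HnrfAux.Lid p r d K L g fs fs' key
  -- Step 3: descend the identity to `K`
  have hinj : Function.Injective
      (MvPolynomial.map (algebraMap K L) : MvPolynomial (Fin 2) K → MvPolynomial (Fin 2) L) :=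
    MvPolynomial.map_injective _ (algebraMap K L).injective
  have hKid : aeval (fun i : Fin 2 => (C g * X i : MvPolynomial (Fin 2) K)) P = C g * P' := by
    apply hinj
    rw [HnrfAux.map_aeval_CX, hP, map_mul, map_C, hP']
    rw [HnrfAux.algHom_aeval_int
        ((aeval (fun i : Fin 2 => (C (algebraMap K L g) * X i : MvPolynomial (Fin 2) L)))
          : MvPolynomial (Fin 2) L →ₐ[L] MvPolynomial (Fin 2) L)]
    rw [show (fun v : Fin 2 × ℕ =>
        aeval (fun i : Fin 2 => (C (algebraMap K L g) * X i : MvPolynomial (Fin 2) L))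
          (C (fs (d - v.2)) * X v.1 ^ p ^ ((d - v.2) * r)))
      = fun v : Fin 2 × ℕ =>
          (C (fs (d - v.2)) * (C (algebraMap K L g) * X v.1) ^ p ^ ((d - v.2) * r)
            : MvPolynomial (Fin 2) L) from by
        funext v; simp [map_mul, map_pow, aeval_C]]
    exact hLid
  -- Step 4: build the isomorphism and check compatibilities
  set T := TruncPoly K p n with hT
  have hroot : (AdjoinRoot.root (Polynomial.X ^ p ^ n : Polynomial K)) ^ p ^ n = 0 := by
    have h := AdjoinRoot.eval₂_root (Polynomial.X ^ p ^ n : Polynomial K)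
    simpa using h
  have mk1 : ∀ a : K,
      Polynomial.aeval (algebraMap K T a * AdjoinRoot.root _)
        (Polynomial.X ^ p ^ n : Polynomial K) = 0 := by
    intro a
    rw [map_pow, Polynomial.aeval_X, mul_pow, hroot, mul_zero]
  set e1 : T →ₐ[K] T :=
    AdjoinRoot.liftAlgHom _ (Algebra.ofId K T) (algebraMap K T g * AdjoinRoot.root _) (mk1 g) with he1
  set e2 : T →ₐ[K] T :=
    AdjoinRoot.liftAlgHom _ (Algebra.ofId K T) (algebraMap K T g⁻¹ * AdjoinRoot.root _) (mk1 g⁻¹) with he2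
  have he1root : e1 (AdjoinRoot.root _) = algebraMap K T g * AdjoinRoot.root _ := by
    rw [he1]; apply AdjoinRoot.liftAlgHom_root
  have he2root : e2 (AdjoinRoot.root _) = algebraMap K T g⁻¹ * AdjoinRoot.root _ := by
    rw [he2]; apply AdjoinRoot.liftAlgHom_root
  have h12 : e1.comp e2 = AlgHom.id K T := by
    apply AdjoinRoot.algHom_ext
    rw [AlgHom.comp_apply, he2root, map_mul, he1root, AlgHom.commutes, AlgHom.id_apply,
      ← mul_assoc, ← map_mul, inv_mul_cancel₀ hg, map_one, one_mul]
  have h21 : e2.comp e1 = AlgHom.id K T := by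
    apply AdjoinRoot.algHom_ext
    rw [AlgHom.comp_apply, he1root, map_mul, he2root, AlgHom.commutes, AlgHom.id_apply,
      ← mul_assoc, ← map_mul, mul_inv_cancel₀ hg, map_one, one_mul]
  refine ⟨AlgEquiv.ofAlgHom e1 e2 h12 h21, he1root, ?_, ?_⟩
  · have hcomp : (Algebra.TensorProduct.map e1 e1).comp Δf = Δf'.comp e1 := by
      apply AdjoinRoot.algHom_ext
      rw [AlgHom.comp_apply, AlgHom.comp_apply, hΔf, he1root, map_mul, AlgHom.commutes, hΔf',
        comp_aeval_apply]
      have h5 := congrArg (aeval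
        ![(AdjoinRoot.root _ : T) ⊗ₜ[K] 1, 1 ⊗ₜ[K] (AdjoinRoot.root _ : T)]) hKid
      rw [comp_aeval_apply, map_mul, aeval_C] at h5
      have h6 : (fun i : Fin 2 => (Algebra.TensorProduct.map e1 e1)
            (![(AdjoinRoot.root _ : T) ⊗ₜ[K] 1, 1 ⊗ₜ[K] (AdjoinRoot.root _ : T)] i))
          = fun i : Fin 2 => aeval
              ![(AdjoinRoot.root _ : T) ⊗ₜ[K] 1, 1 ⊗ₜ[K] (AdjoinRoot.root _ : T)]
              (C g * X i) := by
        funext i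
        fin_cases i <;>
          simp [Algebra.TensorProduct.map_tmul, he1root, map_mul,
            Algebra.TensorProduct.algebraMap_apply, Algebra.TensorProduct.tmul_mul_tmul,
            ← AdjoinRoot.algebraMap_eq, Algebra.algebraMap_eq_smul_one, smul_mul_assoc,
            smul_tmul', tmul_smul]
      rw [h6, h5]
    intro h
    have := DFunLike.congr_fun hcomp h
    simpa [AlgEquiv.toAlgHom_ofAlgHom] using this
  · intro h
    have hc : εf'.comp e1 = εf := by
      apply AdjoinRoot.algHom_ext
      rw [AlgHom.comp_apply, he1root, map_mul, AlgHom.commutes, hεf', hεf, mul_zero]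
    have := DFunLike.congr_fun hc h
    simpa using this
end

section
/- Let L = K(x) with x^{p^n} = b ∈ K, a primitive purely inseparable extension of degree p^n of a field K of characteristic p, and let H = H_{n,r,f} with generator t. The K-algebra map α : L → L ⊗ H determined by α(x) = S_d((f_d x^{p^{dr}} ⊗ 1,...,f_1 x^{p^r} ⊗ 1, x ⊗ 1);(1 ⊗ f_d t^{p^{dr}},...,1 ⊗ f_1 t^{p^r}, 1 ⊗ t)) is well defined, i.e., α(x)^{p^n} = b ⊗ 1. -/
open MvPolynomial TensorProduct

section Aux

lemma mv_eval₂_expand {σ R S : Type*} [CommSemiring R] [CommSemiring S]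
    (h : R →+* S) (v : σ → S) (q : ℕ) (P : MvPolynomial σ R) :
    eval₂ h v (expand q P) = eval₂ h (fun i => v i ^ q) P := by
  induction P using MvPolynomial.induction_on with
  | C a => simp
  | add f g hf hg => simp [map_add, eval₂_add, hf, hg]
  | mul_X f i hf => simp [map_mul, eval₂_mul, hf, eval₂_pow]

lemma mv_map_iterateFrobenius_expand {σ K : Type*} [Field K] (p : ℕ) [Fact p.Prime]
    [CharP K p] (n : ℕ) (P : MvPolynomial σ K) :
    map (iterateFrobenius K p n) (expand (p ^ n) P) = P ^ p ^ n := by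
  haveI : ExpChar K p := .prime Fact.out
  induction P using MvPolynomial.induction_on with
  | C a => rw [expand_C, map_C, iterateFrobenius_def, map_pow]
  | add f g hf hg => rw [map_add, map_add, hf, hg, add_pow_char_pow]
  | mul_X f i hf =>
      rw [map_mul, map_mul, hf, expand_X, map_pow, map_X, mul_pow]

lemma wittAdd_aeval_zero_right (p : ℕ) [Fact p.Prime] {L : Type*} [CommRing L] (d : ℕ)
    (u : Fin 2 × ℕ → L) (hu : ∀ j, u (1, j) = 0) :
    aeval u (WittVector.wittAdd p d) = u (0, d) := by
  have h := WittVector.add_coeff (WittVector.mk p (fun j => u (0, j))) 0 d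
  rw [add_zero] at h
  have he : Function.uncurry
      ![(WittVector.mk p (fun j => u (0, j))).coeff, (0 : WittVector p L).coeff] = u := by
    funext v
    obtain ⟨i, j⟩ := v
    fin_cases i
    · simp [Function.uncurry, WittVector.coeff_mk]
    · simp [Function.uncurry, hu j]
  rw [WittVector.peval, he] at h
  rw [← h, WittVector.coeff_mk]

end Aux

/-- Let `L = K(x)` with `x^{p^n} = b ∈ K` a primitive purely inseparable extension
of degree `p^n`, and `H = H_{n,r,f} = K[t]/(t^{p^n})`.  The coaction
`α(x) = S_d((f_d x^{p^{dr}} ⊗ 1,…, x ⊗ 1); (1 ⊗ f_d t^{p^{dr}},…, 1 ⊗ t))`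
(given by the descended polynomial `P` evaluated at `(x ⊗ 1, 1 ⊗ t)`)
is well defined:  `α(x)^{p^n} = b ⊗ 1`. -/
theorem coaction_well_defined (p n r d : ℕ) [Fact p.Prime]
    (hn : r < n) (hr : 0 < r) (hd : d = (n + r - 1) / r - 1)
    (K L : Type*) [Field K] [CharP K p] [Field L] [Algebra K L]
    [ExpChar L p] [PerfectRing L p] [IsPurelyInseparable K L]
    (f : K) (hf : f ≠ 0)
    (fs : ℕ → L) (hfs0 : fs 0 = 1)
    (hfs1 : fs 1 = (frobeniusEquiv L p).symm (algebraMap K L f))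
    (hfsrec : ∀ i, 2 ≤ i →
      fs i = ((frobeniusEquiv L p).symm)^[i] (algebraMap K L f) * (fs (i - 1)) ^ p ^ r)
    (P : MvPolynomial (Fin 2) K)
    (hP : MvPolynomial.map (algebraMap K L) P =
      aeval (fun v : Fin 2 × ℕ =>
        (C (fs (d - v.2)) * X v.1 ^ p ^ ((d - v.2) * r) : MvPolynomial (Fin 2) L))
        (WittVector.wittAdd p d))
    (M : Type*) [Field M] [Algebra K M]
    (b : K) (hb : ∀ a : K, a ^ p ≠ b)
    (x : M) (hx : x ^ p ^ n = algebraMap K M b)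
    (hgen : Algebra.adjoin K {x} = ⊤) :
    (MvPolynomial.aeval
        ![x ⊗ₜ[K] (1 : TruncPoly K p n),
          (1 : M) ⊗ₜ[K] (AdjoinRoot.root _ : TruncPoly K p n)] P) ^ p ^ n =
      (algebraMap K M b) ⊗ₜ[K] (1 : TruncPoly K p n) := by
  haveI : ExpChar K p := .prime Fact.out
  have hpe : ∀ e : ℕ, p ^ e ≠ 0 := fun e => pow_ne_zero e (Fact.out : p.Prime).ne_zero
  -- Key computation over K (checked after base change to L).
  have key : eval₂ (iterateFrobenius K p n) ![b, 0] P = b := by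
    apply (algebraMap K L).injective
    rw [eval₂_comp_left (algebraMap K L)]
    have hcomm : (algebraMap K L).comp (iterateFrobenius K p n)
        = (iterateFrobenius L p n).comp (algebraMap K L) := by
      ext a
      simp [iterateFrobenius_def, map_pow]
    rw [hcomm, ← eval₂_map, hP]
    have hm := map_aeval (R := ℤ)
      (fun v : Fin 2 × ℕ =>
        (C (fs (d - v.2)) * X v.1 ^ p ^ ((d - v.2) * r) : MvPolynomial (Fin 2) L))
      (eval₂Hom (iterateFrobenius L p n) ((algebraMap K L) ∘ ![b, 0]))
      (WittVector.wittAdd p d)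
    rw [show ((eval₂Hom (iterateFrobenius L p n) ((algebraMap K L) ∘ ![b, 0])).comp
        (algebraMap ℤ (MvPolynomial (Fin 2) L))) = algebraMap ℤ L from Subsingleton.elim _ _]
      at hm
    have hm' : eval₂ (iterateFrobenius L p n) ((algebraMap K L) ∘ ![b, 0])
        (aeval (fun v : Fin 2 × ℕ =>
          (C (fs (d - v.2)) * X v.1 ^ p ^ ((d - v.2) * r) : MvPolynomial (Fin 2) L))
          (WittVector.wittAdd p d))
        = aeval (fun v : Fin 2 × ℕ =>
            (eval₂ (iterateFrobenius L p n) ((algebraMap K L) ∘ ![b, 0])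
              (C (fs (d - v.2)) * X v.1 ^ p ^ ((d - v.2) * r)))) (WittVector.wittAdd p d) := by
      rw [aeval_def]
      exact hm
    rw [hm', wittAdd_aeval_zero_right]
    · simp [eval₂_mul, eval₂_pow, iterateFrobenius_def, hfs0]
    · intro j
      simp [eval₂_mul, eval₂_pow, hpe _, (Fact.out : p.Prime).ne_zero]
  -- Now the main computation.
  rw [← map_pow, ← mv_map_iterateFrobenius_expand p n P, aeval_def, eval₂_map, mv_eval₂_expand]
  have hv : (fun i => (![x ⊗ₜ[K] (1 : TruncPoly K p n),
        (1 : M) ⊗ₜ[K] (AdjoinRoot.root _ : TruncPoly K p n)] i) ^ p ^ n)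
      = (algebraMap K (M ⊗[K] TruncPoly K p n)) ∘ ![b, 0] := by
    funext i
    fin_cases i
    · simp [hx]
    · have hroot : (AdjoinRoot.root (Polynomial.X ^ p ^ n : Polynomial K)) ^ p ^ n = 0 := by
        rw [← AdjoinRoot.mk_X, ← map_pow, AdjoinRoot.mk_self]
      simp [hroot]
  rw [hv, ← eval₂_comp_left (algebraMap K (M ⊗[K] TruncPoly K p n)) (iterateFrobenius K p n)
    ![b, 0] P, key, Algebra.TensorProduct.algebraMap_apply]
end

section
/- In the truncated polynomial Hopf algebra H_{n,n-1,f} = K[t]/(t^{p^n}) with Δ(t) = t⊗1 + 1⊗t + f Σ_{ℓ=1}^{p-1} (1/(ℓ!(p-ℓ)!)) t^{p^{n-1}ℓ} ⊗ t^{p^{n-1}(p-ℓ)}, the dual basis elements z_j ∈ H^* defined by z_j(t^i) = δ_{ij} satisfy z_{p^s}^m = m! · z_{m p^s} for all 0 ≤ s ≤ n-1 and 1 ≤ m ≤ p-1. -/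
open TensorProduct Finset

/-- The convolution product on the dual `H^* = Hom_K(H, K)` induced by a
comultiplication `Δ : H → H ⊗ H`: `(z·w)(h) = (z ⊗ w)(Δ h)`. -/
noncomputable def conv {K H : Type*} [CommRing K] [Ring H] [Algebra K H]
    (Δ : H →ₗ[K] H ⊗[K] H) (z w : H →ₗ[K] K) : H →ₗ[K] K :=
  (LinearMap.mul' K K) ∘ₗ (TensorProduct.map z w) ∘ₗ Δ

/-- Iterated convolution: `convIter Δ z m = z^{m+1}` in the convolution algebra. -/
noncomputable def convIter {K H : Type*} [CommRing K] [Ring H] [Algebra K H]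
    (Δ : H →ₗ[K] H ⊗[K] H) (z : H →ₗ[K] K) : ℕ → (H →ₗ[K] K)
  | 0 => z
  | m + 1 => conv Δ (convIter Δ z m) z

private lemma sq_zero_add_pow {R : Type*} [CommRing R] {e : R} (h : e * e = 0) (a : R) :
    ∀ i : ℕ, (a + e) ^ i = a ^ i + i • (a ^ (i - 1) * e)
  | 0 => by simp
  | 1 => by simp
  | (k + 2) => by
    have ih := sq_zero_add_pow h a (k + 1)
    rw [pow_succ, ih]
    have h1 : k + 2 - 1 = k + 1 := rfl
    have h2 : k + 1 - 1 = k := rfl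
    rw [h1, h2]
    simp only [nsmul_eq_mul, Nat.cast_add, Nat.cast_one]
    push_cast
    linear_combination ((k : R) + 1) * a ^ k * h

private lemma choose_pow_mod (p : ℕ) [Fact p.Prime] (m : ℕ) :
    ∀ s : ℕ, ((((m + 1) * p ^ s).choose (m * p ^ s) : ZMod p)) = ((m + 1 : ℕ) : ZMod p)
  | 0 => by simp [Nat.choose_succ_self_right]
  | (s + 1) => by
    have hp : 0 < p := (Fact.out : p.Prime).pos
    have h := (ZMod.natCast_eq_natCast_iff _ _ _).mpr
      (Choose.choose_modEq_choose_mod_mul_choose_div_nat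
        (p := p) (n := (m + 1) * p ^ (s + 1)) (k := m * p ^ (s + 1)))
    have e1 : (m + 1) * p ^ (s + 1) = ((m + 1) * p ^ s) * p := by ring
    have e2 : m * p ^ (s + 1) = (m * p ^ s) * p := by ring
    rw [e1, e2, Nat.mul_mod_left, Nat.mul_mod_left, Nat.mul_div_cancel _ hp,
      Nat.mul_div_cancel _ hp, Nat.choose_self, one_mul] at h
    rw [e1, e2, h, choose_pow_mod p m s]

/-- In `H_{n,n-1,f} = K[t]/(t^{p^n})` with
`Δ(t) = t⊗1 + 1⊗t + f ∑_{0<ℓ<p} (1/(ℓ!(p-ℓ)!)) t^{p^{n-1}ℓ} ⊗ t^{p^{n-1}(p-ℓ)}`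
(where `1/(ℓ!(p-ℓ)!)` is the image in `K` of the integer `binom(p,ℓ)/p`),
the dual basis elements `z_j ∈ H^*` (`z_j(t^i) = δ_{ij}`) satisfy
`z_{p^s}^m = m! · z_{m p^s}` for `0 ≤ s ≤ n-1` and `1 ≤ m ≤ p-1`, where powers
are convolution powers. -/
theorem dual_basis_conv_pow (p n : ℕ) [Fact p.Prime] (hn : 2 ≤ n)
    (K : Type*) [Field K] [CharP K p] (f : K) (hf : f ≠ 0)
    (Δ : TruncPoly K p n →ₐ[K] TruncPoly K p n ⊗[K] TruncPoly K p n)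
    (hΔ : Δ (AdjoinRoot.root _) =
      ((AdjoinRoot.root _ : TruncPoly K p n) ⊗ₜ[K] (1 : TruncPoly K p n)) +
        ((1 : TruncPoly K p n) ⊗ₜ[K] (AdjoinRoot.root _ : TruncPoly K p n)) +
        ∑ ℓ ∈ Finset.Ioo 0 p, (f * ((p.choose ℓ / p : ℕ) : K)) •
          (((AdjoinRoot.root _ : TruncPoly K p n) ^ (p ^ (n - 1) * ℓ)) ⊗ₜ[K]
            ((AdjoinRoot.root _ : TruncPoly K p n) ^ (p ^ (n - 1) * (p - ℓ)))))
    (z : ℕ → (TruncPoly K p n →ₗ[K] K))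
    (hz : ∀ i j, i < p ^ n → j < p ^ n →
      z j ((AdjoinRoot.root _ : TruncPoly K p n) ^ i) = if i = j then 1 else 0) :
    ∀ s, s ≤ n - 1 → ∀ m, 1 ≤ m → m ≤ p - 1 →
      convIter Δ.toLinearMap (z (p ^ s)) (m - 1) = (m.factorial : K) • z (m * p ^ s) := by
  have hp : p.Prime := Fact.out
  have hp1 : 1 < p := hp.one_lt
  have hn1 : 1 ≤ n := le_trans one_le_two hn
  set q : ℕ := p ^ (n - 1) with hqdef
  have hq0 : 0 < q := pow_pos hp.pos _
  have hqp : q * p = p ^ n := by rw [hqdef, ← pow_succ, Nat.sub_add_cancel hn1]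
  set T : TruncPoly K p n := AdjoinRoot.root _ with hTdef
  have hT0 : T ^ p ^ n = 0 := by
    have := AdjoinRoot.eval₂_root (Polynomial.X ^ p ^ n : Polynomial K)
    simpa using this
  have hTz : ∀ j, p ^ n ≤ j → T ^ j = 0 := by
    intro j hj
    calc T ^ j = T ^ p ^ n * T ^ (j - p ^ n) := by rw [← pow_add, Nat.add_sub_cancel' hj]
    _ = 0 := by rw [hT0, zero_mul]
  have hext : ∀ F G : TruncPoly K p n →ₗ[K] K,
      (∀ i, i < p ^ n → F (T ^ i) = G (T ^ i)) → F = G := by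
    intro F G h
    have hfne : (Polynomial.X ^ p ^ n : Polynomial K) ≠ 0 :=
      pow_ne_zero _ Polynomial.X_ne_zero
    apply (AdjoinRoot.powerBasis hfne).basis.ext
    intro i
    have hi : (i : ℕ) < p ^ n := by
      have h2 := i.2
      simpa using h2
    rw [(AdjoinRoot.powerBasis hfne).basis_eq_pow]
    simpa using h i hi
  set E : TruncPoly K p n ⊗[K] TruncPoly K p n :=
    ∑ ℓ ∈ Finset.Ioo 0 p, (f * ((p.choose ℓ / p : ℕ) : K)) •
      ((T ^ (q * ℓ)) ⊗ₜ[K] (T ^ (q * (p - ℓ)))) with hEdef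
  have hEE : E * E = 0 := by
    rw [hEdef, Finset.sum_mul_sum]
    apply Finset.sum_eq_zero; intro ℓ1 h1
    apply Finset.sum_eq_zero; intro ℓ2 h2
    obtain ⟨hl1, hl1p⟩ := Finset.mem_Ioo.mp h1
    obtain ⟨hl2, hl2p⟩ := Finset.mem_Ioo.mp h2
    rw [smul_mul_smul_comm, Algebra.TensorProduct.tmul_mul_tmul, ← pow_add, ← pow_add]
    by_cases hc : p ≤ ℓ1 + ℓ2
    · have : p ^ n ≤ q * ℓ1 + q * ℓ2 := by
        calc p ^ n = q * p := hqp.symm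
        _ ≤ q * (ℓ1 + ℓ2) := Nat.mul_le_mul_left q hc
        _ = q * ℓ1 + q * ℓ2 := Nat.mul_add q ℓ1 ℓ2
      rw [hTz _ this, TensorProduct.zero_tmul, smul_zero]
    · have : p ^ n ≤ q * (p - ℓ1) + q * (p - ℓ2) := by
        have hle : p ≤ (p - ℓ1) + (p - ℓ2) := by omega
        calc p ^ n = q * p := hqp.symm
        _ ≤ q * ((p - ℓ1) + (p - ℓ2)) := Nat.mul_le_mul_left q hle
        _ = q * (p - ℓ1) + q * (p - ℓ2) := Nat.mul_add q _ _
      rw [hTz _ this, TensorProduct.tmul_zero, smul_zero]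
  have hXY : ∀ j : ℕ, (T ⊗ₜ[K] (1 : TruncPoly K p n) + (1 : TruncPoly K p n) ⊗ₜ[K] T) ^ j =
      ∑ k ∈ range (j + 1), j.choose k • ((T ^ k) ⊗ₜ[K] (T ^ (j - k))) := by
    intro j
    rw [add_pow]
    refine Finset.sum_congr rfl fun k _ => ?_
    rw [Algebra.TensorProduct.tmul_pow, Algebra.TensorProduct.tmul_pow,
      Algebra.TensorProduct.tmul_mul_tmul]
    simp only [one_pow, mul_one, one_mul]
    rw [nsmul_eq_mul]
    exact mul_comm _ _
  have hΔpow : ∀ i : ℕ, Δ (T ^ i) =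
      (∑ k ∈ range (i + 1), i.choose k • ((T ^ k) ⊗ₜ[K] (T ^ (i - k))))
      + i • ((∑ k ∈ range (i - 1 + 1), (i - 1).choose k • ((T ^ k) ⊗ₜ[K] (T ^ (i - 1 - k)))) * E) := by
    intro i
    rw [map_pow, hΔ, sq_zero_add_pow hEE _ i, hXY i, hXY (i - 1)]
  have key : ∀ (a b : ℕ) (c : K) (w : TruncPoly K p n →ₗ[K] K),
      b < p ^ n →
      (∀ k, k < p ^ n → w (T ^ k) = c * (if k = a then 1 else 0)) →
      (∀ ℓ, ℓ ∈ Finset.Ioo 0 p → ∀ k j : ℕ, ¬(k + q * ℓ = a ∧ j + q * (p - ℓ) = b)) →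
      ∀ i, i < p ^ n → conv Δ.toLinearMap w (z b) (T ^ i) =
        ((a + b).choose a : K) * c * (if i = a + b then 1 else 0) := by
    intro a b c w hb hw hEcond i hi
    set Φ : TruncPoly K p n ⊗[K] TruncPoly K p n →ₗ[K] K :=
      (LinearMap.mul' K K).comp (TensorProduct.map w (z b)) with hΦdef
    have hconv : conv Δ.toLinearMap w (z b) (T ^ i) = Φ (Δ (T ^ i)) := rfl
    have hΦt : ∀ u v : TruncPoly K p n, Φ (u ⊗ₜ[K] v) = w u * z b v := by
      intro u v
      rw [hΦdef]
      simp [LinearMap.mul'_apply]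
    rw [hconv, hΔpow i, map_add, map_nsmul]
    have hzero : Φ ((∑ k ∈ range (i - 1 + 1), (i - 1).choose k •
        ((T ^ k) ⊗ₜ[K] (T ^ (i - 1 - k)))) * E) = 0 := by
      rw [Finset.sum_mul, map_sum]
      apply Finset.sum_eq_zero; intro k hk
      rw [smul_mul_assoc, hEdef, Finset.mul_sum, map_nsmul, map_sum]
      have hsum : ∀ ℓ ∈ Finset.Ioo 0 p,
          Φ (((T ^ k) ⊗ₜ[K] (T ^ (i - 1 - k))) * ((f * ((p.choose ℓ / p : ℕ) : K)) •
            ((T ^ (q * ℓ)) ⊗ₜ[K] (T ^ (q * (p - ℓ)))))) = 0 := by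
        intro ℓ hℓ
        rw [mul_smul_comm, map_smul, Algebra.TensorProduct.tmul_mul_tmul,
          ← pow_add, ← pow_add, hΦt]
        suffices h : w (T ^ (k + q * ℓ)) * z b (T ^ (i - 1 - k + q * (p - ℓ))) = 0 by
          rw [h, smul_zero]
        by_cases h1 : k + q * ℓ < p ^ n
        · rw [hw _ h1]
          by_cases h2 : k + q * ℓ = a
          · rw [if_pos h2, mul_one]
            by_cases h3 : i - 1 - k + q * (p - ℓ) < p ^ n
            · rw [hz _ _ h3 hb]
              have hne : ¬(i - 1 - k + q * (p - ℓ) = b) := fun hc =>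
                hEcond ℓ hℓ k (i - 1 - k) ⟨h2, hc⟩
              rw [if_neg hne, mul_zero]
            · rw [hTz _ (le_of_not_gt h3), map_zero, mul_zero]
          · rw [if_neg h2, mul_zero, zero_mul]
        · rw [hTz _ (le_of_not_gt h1), map_zero, zero_mul]
      rw [Finset.sum_eq_zero hsum, smul_zero]
    rw [hzero, smul_zero, add_zero, map_sum]
    have hterm : ∀ k ∈ range (i + 1), Φ (i.choose k • ((T ^ k) ⊗ₜ[K] (T ^ (i - k)))) =
        i.choose k • (c * (if k = a then 1 else 0) * (if i - k = b then 1 else 0)) := by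
      intro k hk
      have hki : k < p ^ n := lt_of_lt_of_le (Finset.mem_range.mp hk) hi
      have hik : i - k < p ^ n := lt_of_le_of_lt (Nat.sub_le i k) hi
      rw [map_nsmul, hΦt, hw k hki, hz (i - k) b hik hb]
    rw [Finset.sum_congr rfl hterm]
    by_cases hiab : i = a + b
    · subst hiab
      rw [if_pos rfl, Finset.sum_eq_single a]
      · rw [Nat.add_sub_cancel_left, if_pos rfl, if_pos rfl, mul_one, mul_one,
          nsmul_eq_mul, mul_one]
      · intro k _ hka
        rw [if_neg hka, mul_zero, zero_mul, smul_zero]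
      · intro habs
        exact absurd (Finset.mem_range.mpr (by omega)) habs
    · rw [if_neg hiab, mul_zero]
      apply Finset.sum_eq_zero
      intro k hk
      by_cases hka : k = a
      · subst hka
        have hne : i - k ≠ b := by
          have := Finset.mem_range.mp hk
          omega
        rw [if_neg hne, mul_zero, smul_zero]
      · rw [if_neg hka, mul_zero, zero_mul, smul_zero]
  intro s hs
  have hbnd : ∀ m', m' ≤ p - 1 → m' * p ^ s < p ^ n := by
    intro m' hm'
    calc m' * p ^ s ≤ (p - 1) * p ^ (n - 1) :=
          Nat.mul_le_mul hm' (Nat.pow_le_pow_right hp.pos hs)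
    _ < p * p ^ (n - 1) := mul_lt_mul_of_pos_right (by omega) hq0
    _ = p ^ n := by rw [← pow_succ', Nat.sub_add_cancel hn1]
  have hps : p ^ s < p ^ n := by
    have := hbnd 1 (by omega)
    simpa using this
  have hEc : ∀ m', m' ≤ p - 2 → ∀ ℓ, ℓ ∈ Finset.Ioo 0 p → ∀ k j : ℕ,
      ¬(k + q * ℓ = m' * p ^ s ∧ j + q * (p - ℓ) = p ^ s) := by
    intro m' hm' ℓ hℓ k j ⟨h1, h2⟩
    obtain ⟨hℓ0, hℓp⟩ := Finset.mem_Ioo.mp hℓ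
    by_cases hcase : s = n - 1
    · subst hcase
      rw [← hqdef] at h1 h2
      have hℓm : ℓ ≤ m' := by
        by_contra hc
        push_neg at hc
        have : m' * q < q * ℓ := by
          calc m' * q < ℓ * q := Nat.mul_lt_mul_of_lt_of_le hc (le_refl q) hq0
          _ = q * ℓ := mul_comm _ _
        omega
      have h2' : 2 ≤ p - ℓ := by omega
      have : 2 * q ≤ q * (p - ℓ) := by
        calc 2 * q = q * 2 := mul_comm _ _
        _ ≤ q * (p - ℓ) := Nat.mul_le_mul_left q h2'
      omega
    · have hs' : s + 1 ≤ n - 1 := by omega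
      have hlt : m' * p ^ s < q := by
        calc m' * p ^ s < p * p ^ s := mul_lt_mul_of_pos_right (by omega) (pow_pos hp.pos s)
        _ = p ^ (s + 1) := (pow_succ' p s).symm
        _ ≤ p ^ (n - 1) := Nat.pow_le_pow_right hp.pos hs'
      have : q ≤ q * ℓ := Nat.le_mul_of_pos_right q hℓ0
      omega
  have hbin : ∀ m' : ℕ, (((m' + 1) * p ^ s).choose (m' * p ^ s) : K) = ((m' + 1 : ℕ) : K) := by
    intro m'
    have hzmod := choose_pow_mod p m' s
    have := congrArg (ZMod.castHom (dvd_refl p) K) hzmod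
    simpa using this
  have hstep : ∀ m', 1 ≤ m' → m' + 1 ≤ p - 1 →
      conv Δ.toLinearMap ((m'.factorial : K) • z (m' * p ^ s)) (z (p ^ s)) =
        (((m' + 1).factorial : K)) • z ((m' + 1) * p ^ s) := by
    intro m' h1 h2
    apply hext
    intro i hi
    have hw : ∀ k, k < p ^ n → ((m'.factorial : K) • z (m' * p ^ s)) (T ^ k) =
        (m'.factorial : K) * (if k = m' * p ^ s then 1 else 0) := by
      intro k hk
      rw [LinearMap.smul_apply, hz k _ hk (hbnd m' (by omega)), smul_eq_mul]
    rw [key (m' * p ^ s) (p ^ s) (m'.factorial : K) _ hps hw (hEc m' (by omega)) i hi,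
      LinearMap.smul_apply, hz i _ hi (hbnd (m' + 1) (by omega)), smul_eq_mul]
    have hsum : m' * p ^ s + p ^ s = (m' + 1) * p ^ s := by ring
    rw [hsum, hbin m', Nat.factorial_succ]
    push_cast
    ring
  intro m
  induction m with
  | zero => exact fun h => absurd h (by omega)
  | succ k ih =>
    intro hm1 hm2
    by_cases hk : k = 0
    · subst hk
      show convIter Δ.toLinearMap (z (p ^ s)) 0 = _
      rw [show (1 : ℕ) * p ^ s = p ^ s from one_mul _]
      simp only [convIter, Nat.factorial_one, Nat.cast_one, one_smul]
      norm_num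
    · have hk1 : 1 ≤ k := by omega
      have heq := ih hk1 (by omega)
      have hred : k + 1 - 1 = (k - 1) + 1 := by omega
      rw [hred]
      show conv Δ.toLinearMap (convIter Δ.toLinearMap (z (p ^ s)) (k - 1)) (z (p ^ s)) = _
      rw [heq]
      exact hstep k hk1 (by omega)
end

section
/- In the dual H^* of H_{n,n-1,f} as above, the elements z_{p^s} satisfy z_{p^s}^p = 0 for all 0 ≤ s ≤ n-2. -/
open TensorProduct Finset

/-- In `H_{n,n-1,f} = K[t]/(t^{p^n})` with
`Δ(t) = t⊗1 + 1⊗t + f ∑_{0<ℓ<p} (1/(ℓ!(p-ℓ)!)) t^{p^{n-1}ℓ} ⊗ t^{p^{n-1}(p-ℓ)}`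
(where `1/(ℓ!(p-ℓ)!)` is the image in `K` of the integer `binom(p,ℓ)/p`),
the dual basis elements `z_j ∈ H^*` (`z_j(t^i) = δ_{ij}`) satisfy
`z_{p^s}^p = 0` for all `0 ≤ s ≤ n-2`, where powers are convolution powers
(`convIter Δ z (p-1) = z^p`). -/
theorem dual_basis_conv_pow_p_eq_zero (p n : ℕ) [Fact p.Prime] (hn : 2 ≤ n)
    (K : Type*) [Field K] [CharP K p] (f : K) (hf : f ≠ 0)
    (Δ : TruncPoly K p n →ₐ[K] TruncPoly K p n ⊗[K] TruncPoly K p n)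
    (hΔ : Δ (AdjoinRoot.root _) =
      ((AdjoinRoot.root _ : TruncPoly K p n) ⊗ₜ[K] (1 : TruncPoly K p n)) +
        ((1 : TruncPoly K p n) ⊗ₜ[K] (AdjoinRoot.root _ : TruncPoly K p n)) +
        ∑ ℓ ∈ Finset.Ioo 0 p, (f * ((p.choose ℓ / p : ℕ) : K)) •
          (((AdjoinRoot.root _ : TruncPoly K p n) ^ (p ^ (n - 1) * ℓ)) ⊗ₜ[K]
            ((AdjoinRoot.root _ : TruncPoly K p n) ^ (p ^ (n - 1) * (p - ℓ)))))
    (z : ℕ → (TruncPoly K p n →ₗ[K] K))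
    (hz : ∀ i j, i < p ^ n → j < p ^ n →
      z j ((AdjoinRoot.root _ : TruncPoly K p n) ^ i) = if i = j then 1 else 0) :
    ∀ s, s ≤ n - 2 → convIter Δ.toLinearMap (z (p ^ s)) (p - 1) = 0 := by
  have hp : p.Prime := Fact.out
  have hp2 : 2 ≤ p := hp.two_le
  set R := TruncPoly K p n with hR
  set r : R := AdjoinRoot.root _ with hr
  have hpoly : (Polynomial.X ^ p ^ n : Polynomial K) ≠ 0 :=
    pow_ne_zero _ Polynomial.X_ne_zero
  -- r ^ (p^n) = 0
  have hrN : r ^ p ^ n = 0 := by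
    have h := AdjoinRoot.mk_self (f := (Polynomial.X ^ p ^ n : Polynomial K))
    rwa [map_pow, AdjoinRoot.mk_X] at h
  have hrBig : ∀ m, p ^ n ≤ m → r ^ m = 0 := by
    intro m hm
    obtain ⟨k, rfl⟩ := Nat.exists_eq_add_of_le hm
    rw [pow_add, hrN, zero_mul]
  -- z values on all powers
  have hzv : ∀ j, j < p ^ n → ∀ i, z j (r ^ i) = if i = j then 1 else 0 := by
    intro j hj i
    by_cases hi : i < p ^ n
    · exact hz i j hi hj
    · rw [hrBig i (le_of_not_gt hi), map_zero, if_neg (by omega)]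
  -- extensionality on powers of r
  have hext : ∀ (φ ψ : R →ₗ[K] K), (∀ i, φ (r ^ i) = ψ (r ^ i)) → φ = ψ := by
    intro φ ψ h
    apply Module.Basis.ext (AdjoinRoot.powerBasis hpoly).basis
    intro i
    rw [PowerBasis.basis_eq_pow, AdjoinRoot.powerBasis_gen]
    exact h _
  -- z α kills r^a * c for a > α
  have hkill : ∀ α a, α < a → α < p ^ n → ∀ c : R, z α (r ^ a * c) = 0 := by
    intro α a hαa hα c
    have h0 : (z α) ∘ₗ (LinearMap.mulLeft K (r ^ a)) = (0 : R →ₗ[K] K) := by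
      apply hext
      intro i
      simp only [LinearMap.comp_apply, LinearMap.mulLeft_apply, LinearMap.zero_apply]
      rw [← pow_add, hzv α hα, if_neg (by omega)]
    exact DFunLike.congr_fun h0 c
  -- the functional g α β on R ⊗ R
  set g : ℕ → ℕ → (R ⊗[K] R →ₗ[K] K) := fun α β =>
    (LinearMap.mul' K K) ∘ₗ (TensorProduct.map (z α) (z β)) with hg
  have hgt : ∀ α β (a b : R), g α β (a ⊗ₜ[K] b) = z α a * z β b := by
    intro α β a b
    simp [hg, LinearMap.mul'_apply]
  -- g kills (r^a ⊗ b) * y when a > α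
  have hgkill : ∀ α β a, α < a → α < p ^ n → ∀ (b : R) (y : R ⊗[K] R),
      g α β (((r ^ a) ⊗ₜ[K] b) * y) = 0 := by
    intro α β a hαa hα b y
    induction y using TensorProduct.induction_on with
    | zero => rw [mul_zero, map_zero]
    | tmul c d =>
        rw [Algebra.TensorProduct.tmul_mul_tmul, hgt, hkill α a hαa hα, zero_mul]
    | add y1 y2 h1 h2 => rw [mul_add, map_add, h1, h2, add_zero]
  -- value of g on powers of v = r⊗1 + 1⊗r
  set v : R ⊗[K] R := r ⊗ₜ[K] (1 : R) + (1 : R) ⊗ₜ[K] r with hv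
  have hgv : ∀ α β, α < p ^ n → β < p ^ n → ∀ m,
      g α β (v ^ m) = if m = α + β then (m.choose α : K) else 0 := by
    intro α β hα hβ m
    rw [hv, add_pow, map_sum]
    have hterm : ∀ i ∈ range (m + 1),
        g α β ((r ⊗ₜ[K] (1 : R)) ^ i * ((1 : R) ⊗ₜ[K] r) ^ (m - i) * (m.choose i : R ⊗[K] R))
          = (m.choose i : K) * ((if i = α then 1 else 0) * (if m - i = β then 1 else 0)) := by
      intro i _
      have h1 : (r ⊗ₜ[K] (1 : R)) ^ i = (r ^ i) ⊗ₜ[K] (1 : R) := by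
        rw [Algebra.TensorProduct.tmul_pow, one_pow]
      have h2 : ((1 : R) ⊗ₜ[K] r) ^ (m - i) = (1 : R) ⊗ₜ[K] (r ^ (m - i)) := by
        rw [Algebra.TensorProduct.tmul_pow, one_pow]
      rw [h1, h2, Algebra.TensorProduct.tmul_mul_tmul, mul_one, one_mul]
      rw [mul_comm _ ((m.choose i : R ⊗[K] R)), ← nsmul_eq_mul, map_nsmul, hgt,
        hzv α hα, hzv β hβ, nsmul_eq_mul]
    rw [Finset.sum_congr rfl hterm]
    rw [Finset.sum_eq_single α]
    · by_cases hm : m = α + β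
      · rw [if_pos hm, if_pos (by omega), if_pos (by omega)]
        ring
      · rw [if_neg hm]
        by_cases hαm : α ≤ m
        · rw [if_pos rfl, if_neg (by omega)]
          ring
        · rw [Nat.choose_eq_zero_of_lt (by omega)]
          push_cast
          ring
    · intro i _ hi
      rw [if_neg hi]
      ring
    · intro hαm
      rw [Nat.choose_eq_zero_of_lt (by simpa using hαm)]
      push_cast
      ring
  -- g kills W * y where W is the f-part
  set W : R ⊗[K] R := ∑ ℓ ∈ Finset.Ioo 0 p, (f * ((p.choose ℓ / p : ℕ) : K)) •
      ((r ^ (p ^ (n - 1) * ℓ)) ⊗ₜ[K] (r ^ (p ^ (n - 1) * (p - ℓ)))) with hW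
  have hgW : ∀ α β, α < p ^ (n - 1) → ∀ y : R ⊗[K] R, g α β (W * y) = 0 := by
    intro α β hα y
    have hαn : α < p ^ n :=
      lt_of_lt_of_le hα (Nat.pow_le_pow_right (by omega) (by omega))
    rw [hW, Finset.sum_mul, map_sum]
    apply Finset.sum_eq_zero
    intro ℓ hℓ
    have hℓ1 : 1 ≤ ℓ := (Finset.mem_Ioo.mp hℓ).1
    rw [smul_mul_assoc, map_smul, hgkill α β _ (by nlinarith [Nat.one_le_two_pow (n := 0)]) hαn,
      smul_zero]
  -- main value of g on Δ(r)^j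
  have hgu : ∀ α β, α < p ^ (n - 1) → β < p ^ (n - 1) → ∀ j,
      g α β ((Δ r) ^ j) = if j = α + β then (j.choose α : K) else 0 := by
    intro α β hα hβ j
    have hαn : α < p ^ n :=
      lt_of_lt_of_le hα (Nat.pow_le_pow_right (by omega) (by omega))
    have hβn : β < p ^ n :=
      lt_of_lt_of_le hβ (Nat.pow_le_pow_right (by omega) (by omega))
    have hΔr : Δ r = v + W := by rw [hΔ, hv, hW]
    rw [hΔr, add_pow, map_sum]
    rw [Finset.sum_eq_single j]
    · rw [Nat.sub_self, pow_zero, mul_one, Nat.choose_self, Nat.cast_one, mul_one]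
      exact hgv α β hαn hβn j
    · intro k hkmem hk
      rw [Finset.mem_range] at hkmem
      have h1 : j - k = (j - k - 1) + 1 := by omega
      rw [h1, pow_succ]
      have h2 : v ^ k * (W ^ (j - k - 1) * W) * ((j.choose k : ℕ) : R ⊗[K] R)
          = W * (v ^ k * W ^ (j - k - 1) * ((j.choose k : ℕ) : R ⊗[K] R)) := by ring
      rw [h2]
      exact hgW α β hα _
    · intro hj
      exact absurd (Finset.self_mem_range_succ j) hj
  -- the main induction
  intro s hs
  have hsn : p ^ (s + 1) ≤ p ^ (n - 1) := Nat.pow_le_pow_right (by omega) (by omega)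
  have hpn1 : p ^ (n - 1) < p ^ n := Nat.pow_lt_pow_right (by omega) (by omega)
  have hps : 0 < p ^ s := Nat.pow_pos (by omega)
  have key : ∀ m, m ≤ p - 1 → convIter Δ.toLinearMap (z (p ^ s)) m =
      ((∏ i ∈ range m, ((i + 2) * p ^ s).choose (p ^ s) : ℕ) : K) •
        z ((m + 1) * p ^ s) := by
    intro m
    induction m with
    | zero => intro _; simp [convIter]
    | succ m ih =>
        intro hm
        have hα : (m + 1) * p ^ s < p ^ (n - 1) := by
          calc (m + 1) * p ^ s < p * p ^ s := by
                exact Nat.mul_lt_mul_of_lt_of_le (by omega) le_rfl hps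
            _ = p ^ (s + 1) := by rw [pow_succ, mul_comm]
            _ ≤ p ^ (n - 1) := hsn
        have hβ : p ^ s < p ^ (n - 1) :=
          lt_of_lt_of_le (Nat.pow_lt_pow_right (by omega) (by omega)) hsn
        have hαβ : (m + 2) * p ^ s < p ^ n := by
          calc (m + 2) * p ^ s ≤ p * p ^ s := Nat.mul_le_mul_right _ (by omega)
            _ = p ^ (s + 1) := by rw [pow_succ, mul_comm]
            _ ≤ p ^ (n - 1) := hsn
            _ < p ^ n := hpn1
        simp only [convIter]
        rw [ih (by omega)]
        apply hext
        intro i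
        have hL : conv Δ.toLinearMap
            (((∏ i ∈ range m, ((i + 2) * p ^ s).choose (p ^ s) : ℕ) : K) •
              z ((m + 1) * p ^ s)) (z (p ^ s)) (r ^ i)
            = ((∏ i ∈ range m, ((i + 2) * p ^ s).choose (p ^ s) : ℕ) : K) *
              g ((m + 1) * p ^ s) (p ^ s) ((Δ r) ^ i) := by
          simp only [conv, hg, LinearMap.comp_apply, AlgHom.toLinearMap_apply, map_pow,
            TensorProduct.map_smul_left, LinearMap.smul_apply, map_smul, smul_eq_mul]
        rw [hL, hgu _ _ hα hβ i, LinearMap.smul_apply, smul_eq_mul, hzv _ hαβ,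
          prod_range_succ]
        have he : (m + 1) * p ^ s + p ^ s = (m + 2) * p ^ s := by ring
        have hc : ((m + 2) * p ^ s).choose ((m + 1) * p ^ s)
            = ((m + 2) * p ^ s).choose (p ^ s) := by
          have h' := Nat.choose_symm (n := (m + 2) * p ^ s) (k := p ^ s)
            (Nat.le_mul_of_pos_left _ (by omega))
          rw [show (m + 2) * p ^ s - p ^ s = (m + 1) * p ^ s by omega] at h'
          exact h'
        rw [he]
        by_cases hi : i = (m + 2) * p ^ s
        · rw [if_pos hi, if_pos hi, hi, hc]
          push_cast
          ring
        · rw [if_neg hi, if_neg hi]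
          ring
  have hkey := key (p - 1) le_rfl
  rw [hkey]
  have hfac : p ∣ ((p - 2 + 2) * p ^ s).choose (p ^ s) := by
    rw [show p - 2 + 2 = p by omega, show p * p ^ s = p ^ (s + 1) by
      rw [pow_succ, mul_comm]]
    exact hp.dvd_choose_pow (by positivity)
      (Nat.ne_of_lt (Nat.pow_lt_pow_right (by omega) (by omega)))
  have hdvd : p ∣ ∏ i ∈ range (p - 1), ((i + 2) * p ^ s).choose (p ^ s) :=
    dvd_trans hfac (Finset.dvd_prod_of_mem _ (Finset.mem_range.mpr (by omega)))
  rw [(CharP.cast_eq_zero_iff K p _).mpr hdvd, zero_smul]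
end
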